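/- Let φ : ℝ → ℝ be C¹, strictly decreasing, with φ(ξ) → u_l as ξ → -∞ and φ(ξ) → u_r as ξ → +∞, where u_r < u_l. Let f be C² with f'' ≥ G > 0 on [u_r, u_l], let ξ* satisfy f'(φ(ξ*)) = s for some s, and let B := min_{ξ∈[ξ*-1, ξ*+1]} |φ'(ξ)| > 0. Then for all ξ ∈ ℝ and all α with 0 < α ≤ B/min{|φ(ξ*-1)-φ(ξ*)|, |φ(ξ*+1)-φ(ξ*)|} (say), the quantity A_α(ξ) := -α·sign(ξ - ξ*)·(f'(φ(ξ)) - s) + f''(φ(ξ))·|φ'(ξ)| satisfies A_α(ξ) ≥ C₀·α, where C₀ := G·min{B/α, min{|φ(ξ*-1)-φ(ξ*)|, |φ(ξ*+1)-φ(ξ*)|}}. -/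

import Mathlib

open Real Filter

/-!
Since `φ` is decreasing and `f'` grows at rate at least `G`, the transport term
`-α sign(ξ - ξ*) (f'(φ ξ) - s)` is at least `α G |φ ξ - φ ξ*|`, while the convexity term
`f''(φ ξ) |φ' ξ|` is at least `G |φ' ξ|`. Within distance `1` of `ξ*` the second bound gives
`G B`; further away the first gives `α G m`, with `m` the smaller of the two jumps of `φ`
over `[ξ* - 1, ξ*]` and `[ξ*, ξ* + 1]`.
-/

theorem ContDiff.mul_sub_le_deriv_sub_deriv {f : ℝ → ℝ} {D : Set ℝ} {G : ℝ} (hD : Convex ℝ D)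
    (hf : ContDiff ℝ 2 f) (hf'' : ∀ u ∈ D, G ≤ iteratedDeriv 2 f u) :
    ∀ᵉ (x ∈ D) (y ∈ D), x ≤ y → G * (y - x) ≤ deriv f y - deriv f x := by
  have hdiff : Differentiable ℝ (deriv f) := by
    simpa [iteratedDeriv_one] using hf.differentiable_iteratedDeriv 1 (by norm_num)
  refine hD.mul_sub_le_image_sub_of_le_deriv (hf.continuous_deriv one_le_two).continuousOn
    hdiff.differentiableOn fun x hx => ?_
  simpa [iteratedDeriv_succ, iteratedDeriv_one] using hf'' x (interior_subset hx)

theorem Antitone.mul_abs_sub_le_neg_sign_mul_sub {φ g : ℝ → ℝ} {D : Set ℝ} {G : ℝ}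
    (hφ : Antitone φ) (hφD : ∀ x, φ x ∈ D)
    (hg : ∀ᵉ (a ∈ D) (b ∈ D), a ≤ b → G * (b - a) ≤ g b - g a) (ξ ξ₀ : ℝ) :
    G * |φ ξ - φ ξ₀| ≤ -Real.sign (ξ - ξ₀) * (g (φ ξ) - g (φ ξ₀)) := by
  rcases lt_trichotomy ξ ξ₀ with hlt | rfl | hgt
  · have hle : φ ξ₀ ≤ φ ξ := hφ hlt.le
    rw [Real.sign_of_neg (sub_neg.mpr hlt), abs_of_nonneg (sub_nonneg.mpr hle)]
    simpa using hg _ (hφD ξ₀) _ (hφD ξ) hle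
  · simp
  · have hle : φ ξ ≤ φ ξ₀ := hφ hgt.le
    rw [Real.sign_of_pos (sub_pos.mpr hgt), abs_of_nonpos (sub_nonpos.mpr hle)]
    linarith [hg _ (hφD ξ) _ (hφD ξ₀) hle]

theorem Antitone.min_abs_sub_le_abs_sub {φ : ℝ → ℝ} (hφ : Antitone φ) {r ξ ξ₀ : ℝ}
    (hr : 0 ≤ r) (h : r ≤ |ξ - ξ₀|) :
    min |φ (ξ₀ - r) - φ ξ₀| |φ (ξ₀ + r) - φ ξ₀| ≤ |φ ξ - φ ξ₀| := by
  rcases le_abs'.mp h with hleft | hright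
  · have h₁ : φ ξ₀ ≤ φ (ξ₀ - r) := hφ (by linarith)
    have h₂ : φ (ξ₀ - r) ≤ φ ξ := hφ (by linarith)
    refine (min_le_left _ _).trans ?_
    rw [abs_of_nonneg (by linarith), abs_of_nonneg (by linarith)]
    linarith
  · have h₁ : φ (ξ₀ + r) ≤ φ ξ₀ := hφ (by linarith)
    have h₂ : φ ξ ≤ φ (ξ₀ + r) := hφ (by linarith)
    refine (min_le_right _ _).trans ?_
    rw [abs_of_nonpos (by linarith), abs_of_nonpos (by linarith)]
    linarith

theorem stmt12_general (φ φ' f : ℝ → ℝ) (ur ul s G B ξs : ℝ)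
    (hanti : StrictAnti φ)
    (hlimL : Tendsto φ atBot (nhds ul)) (hlimR : Tendsto φ atTop (nhds ur))
    (hf : ContDiff ℝ 2 f) (hG : 0 < G)
    (hconv : ∀ u ∈ Set.Icc ur ul, G ≤ iteratedDeriv 2 f u)
    (hξs : deriv f (φ ξs) = s)
    (hB : B = sInf ((fun ξ => |φ' ξ|) '' Set.Icc (ξs - 1) (ξs + 1))) :
    ∀ α : ℝ, 0 < α →
      α ≤ B / min |φ (ξs - 1) - φ ξs| |φ (ξs + 1) - φ ξs| →
      ∀ ξ : ℝ,
        -α * Real.sign (ξ - ξs) * (deriv f (φ ξ) - s) + iteratedDeriv 2 f (φ ξ) * |φ' ξ|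
          ≥ (G * min (B / α) (min |φ (ξs - 1) - φ ξs| |φ (ξs + 1) - φ ξs|)) * α := by
  intro α hα _ ξ
  have hmem : ∀ x, φ x ∈ Set.Icc ur ul := fun x =>
    ⟨hanti.antitone.le_of_tendsto hlimR x, hanti.antitone.ge_of_tendsto hlimL x⟩
  have htransport : G * |φ ξ - φ ξs| ≤ -Real.sign (ξ - ξs) * (deriv f (φ ξ) - s) :=
    hξs ▸ hanti.antitone.mul_abs_sub_le_neg_sign_mul_sub hmem
      (hf.mul_sub_le_deriv_sub_deriv (convex_Icc ur ul) hconv) ξ ξs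
  have hlower : G * (α * |φ ξ - φ ξs| + |φ' ξ|) ≤
      -α * Real.sign (ξ - ξs) * (deriv f (φ ξ) - s) + iteratedDeriv 2 f (φ ξ) * |φ' ξ| := by
    nlinarith [hconv _ (hmem ξ), abs_nonneg (φ' ξ)]
  suffices hmin : min (B / α) (min |φ (ξs - 1) - φ ξs| |φ (ξs + 1) - φ ξs|) * α ≤
      α * |φ ξ - φ ξs| + |φ' ξ| by
    exact (mul_assoc G _ α).trans_le ((mul_le_mul_of_nonneg_left hmin hG.le).trans hlower)
  rcases le_or_gt |ξ - ξs| 1 with hnear | hfar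
  · have hξ : ξ ∈ Set.Icc (ξs - 1) (ξs + 1) := by
      constructor <;> linarith [abs_le.mp hnear]
    have hBle : B ≤ |φ' ξ| :=
      hB ▸ csInf_le ⟨0, by rintro _ ⟨_, _, rfl⟩; exact abs_nonneg _⟩ ⟨ξ, hξ, rfl⟩
    calc min (B / α) _ * α ≤ B / α * α := by gcongr; exact min_le_left _ _
      _ = B := div_mul_cancel₀ B hα.ne'
      _ ≤ α * |φ ξ - φ ξs| + |φ' ξ| := by nlinarith [abs_nonneg (φ ξ - φ ξs)]
  · calc min (B / α) _ * α ≤ |φ ξ - φ ξs| * α := by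
          gcongr
          exact (min_le_right _ _).trans (hanti.antitone.min_abs_sub_le_abs_sub zero_le_one hfar.le)
      _ ≤ α * |φ ξ - φ ξs| + |φ' ξ| := by linarith [abs_nonneg (φ' ξ)]

theorem stmt12 (φ φ' f : ℝ → ℝ) (ur ul s G B ξs : ℝ) (hlt : ur < ul)
    (hφderiv : ∀ ξ : ℝ, HasDerivAt φ (φ' ξ) ξ) (hφ'cont : Continuous φ')
    (hanti : StrictAnti φ)
    (hlimL : Tendsto φ atBot (nhds ul)) (hlimR : Tendsto φ atTop (nhds ur))
    (hf : ContDiff ℝ 2 f) (hG : 0 < G)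
    (hconv : ∀ u ∈ Set.Icc ur ul, G ≤ iteratedDeriv 2 f u)
    (hξs : deriv f (φ ξs) = s)
    (hB : B = sInf ((fun ξ => |φ' ξ|) '' Set.Icc (ξs - 1) (ξs + 1))) (hBpos : 0 < B) :
    ∀ α : ℝ, 0 < α →
      α ≤ B / min |φ (ξs - 1) - φ ξs| |φ (ξs + 1) - φ ξs| →
      ∀ ξ : ℝ,
        -α * Real.sign (ξ - ξs) * (deriv f (φ ξ) - s) + iteratedDeriv 2 f (φ ξ) * |φ' ξ|
          ≥ (G * min (B / α) (min |φ (ξs - 1) - φ ξs| |φ (ξs + 1) - φ ξs|)) * α :=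
  stmt12_general φ φ' f ur ul s G B ξs hanti hlimL hlimR hf hG hconv hξs hB
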